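/- For every nontrivial abelian group A, the wreath product A ≀ ℤ has no faithful representation as a self-replicating bounded automata group: there is no finite set X with at least two elements and no injective homomorphism φ : A ≀ ℤ → Aut(X*) such that φ(A ≀ ℤ) is a self-replicating bounded automata group. -/

import Mathlib

universe u v

/-- The automorphism group of the rooted tree `X*`: permutations of the free monoid
`List X` that preserve the prefix relation. -/
def treeAut (X : Type u) : Subgroup (Equiv.Perm (List X)) where
  carrier := {g | ∀ a b : List X, a <+: b ↔ g a <+: g b}
  one_mem' := by intro a b; simp
  mul_mem' := by
    intro g h hg hh a b
    simpa [Equiv.Perm.mul_apply] using (hh a b).trans (hg (h a) (h b))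
  inv_mem' := by
    intro g hg a b
    simpa using (hg (g⁻¹ a) (g⁻¹ b)).symm

/-- The section of `g` at the word `w`: the unique automorphism `s` satisfying
`g (w ++ v) = g w ++ s v` for all `v` (with junk value `1` if no such permutation exists). -/
noncomputable def secAt {X : Type u} (g : Equiv.Perm (List X)) (w : List X) :
    Equiv.Perm (List X) :=
  haveI := Classical.propDecidable
  if h : ∃ s : Equiv.Perm (List X), ∀ v : List X, g (w ++ v) = g w ++ s v then h.choose
  else 1

/-- The permutation of `X` induced by `g` on the first level of the tree. -/
noncomputable def perm1 {X : Type u} (g : Equiv.Perm (List X)) : Equiv.Perm X :=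
  haveI := Classical.propDecidable
  if h : ∃ σ : Equiv.Perm X, ∀ x : X, g [x] = [σ x] then h.choose else 1

/-- A permutation of `X`, viewed as a finitary automorphism of `X*` of depth (at most) one. -/
def embed1 {X : Type u} (σ : Equiv.Perm X) : Equiv.Perm (List X) where
  toFun w := match w with
    | [] => []
    | x :: vtl => σ x :: vtl
  invFun w := match w with
    | [] => []
    | x :: vtl => σ⁻¹ x :: vtl
  left_inv := by rintro (_ | ⟨x, vtl⟩) <;> simp
  right_inv := by rintro (_ | ⟨x, vtl⟩) <;> simp

/-- `G` is self-similar: all sections of elements of `G` belong to `G`. -/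
def SelfSimilarSub {X : Type u} (G : Subgroup (Equiv.Perm (List X))) : Prop :=
  ∀ g ∈ G, ∀ w : List X, secAt g w ∈ G

/-- `sec_G(v)`: the image of the pointwise stabilizer of `v` in `G` under the
section homomorphism at `v`. -/
def secImage {X : Type u} (G : Subgroup (Equiv.Perm (List X))) (v : List X) :
    Set (Equiv.Perm (List X)) :=
  {h | ∃ g ∈ G, g v = v ∧ secAt g v = h}

/-- `G` is self-replicating: self-similar, transitive on `X`, and `sec_G(x) = G`
for every `x ∈ X`. -/
def SelfReplicating {X : Type u} (G : Subgroup (Equiv.Perm (List X))) : Prop :=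
  SelfSimilarSub G ∧ (∀ x y : X, ∃ g ∈ G, g [x] = [y]) ∧
    ∀ x : X, secImage G [x] = (G : Set (Equiv.Perm (List X)))

/-- `G` is weakly self-replicating: `sec_G(v) = G` for every word `v`. -/
def WeaklySelfReplicating {X : Type u} (G : Subgroup (Equiv.Perm (List X))) : Prop :=
  ∀ v : List X, secImage G v = (G : Set (Equiv.Perm (List X)))

/-- `g` is finitary: all sections at some level are trivial. -/
def IsFinitary {X : Type u} (g : Equiv.Perm (List X)) : Prop :=
  ∃ k : ℕ, ∀ v : List X, v.length = k → secAt g v = 1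

/-- `g` is directed. -/
def IsDirectedAut {X : Type u} (g : Equiv.Perm (List X)) : Prop :=
  ∃ k : ℕ, 1 ≤ k ∧ ∃ w : List X, w.length = k ∧ secAt g w = g ∧
    ∀ v : List X, v.length = k → v ≠ w → IsFinitary (secAt g v)

/-- `g` has bounded activity. -/
def IsBoundedAut {X : Type u} (g : Equiv.Perm (List X)) : Prop :=
  ∃ N : ℕ, ∀ n : ℕ, 1 ≤ n →
    Set.ncard {v : List X | v.length = n ∧ secAt g v ≠ 1} ≤ N

/-- `g` is finite state. -/
def IsFiniteState {X : Type u} (g : Equiv.Perm (List X)) : Prop :=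
  (Set.range fun v : List X => secAt g v).Finite

/-- A bounded automata group: a finitely generated self-similar group of tree
automorphisms, all of whose elements are bounded and finite state. -/
def BoundedAutomataGroup {X : Type u} (G : Subgroup (Equiv.Perm (List X))) : Prop :=
  G ≤ treeAut X ∧ G.FG ∧ SelfSimilarSub G ∧
    ∀ g ∈ G, IsBoundedAut g ∧ IsFiniteState g

/-- An odometer: `⟨d⟩` is transitive on `X` and `d` has exactly one nontrivial
first-level section, which equals `d`. -/
def IsOdometer {X : Type u} (d : Equiv.Perm (List X)) : Prop :=
  (∀ x y : X, ∃ n : ℤ, (d ^ n) [x] = [y]) ∧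
  (∀ x : X, secAt d [x] = 1 ∨ secAt d [x] = d) ∧
  ∃! x : X, secAt d [x] = d

/-- A generalized basilica group, with distinguished generating set `Y`. -/
def GenBasilica {X : Type u} (G : Subgroup (Equiv.Perm (List X)))
    (Y : Set (Equiv.Perm (List X))) : Prop :=
  G ≤ treeAut X ∧ Y.Finite ∧ Subgroup.closure Y = G ∧
    ∀ g ∈ Y, (∀ x : X, secAt g [x] = 1) ∨
      ((∀ x : X, secAt g [x] = 1 ∨ secAt g [x] = g) ∧ ∃! x : X, secAt g [x] = g)

/-- The generating set `Y` is balanced: for each directed `g ∈ Y` with active vertex `x`,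
the least `n ≥ 1` such that `g ^ n` fixes `x` also satisfies that `g ^ n` fixes `X`
pointwise. -/
def BalancedSet {X : Type u} (Y : Set (Equiv.Perm (List X))) : Prop :=
  ∀ g ∈ Y, IsDirectedAut g → ∀ x : X, secAt g [x] = g →
    ∀ n : ℕ, 1 ≤ n → (g ^ n) [x] = [x] →
      (∀ m : ℕ, 1 ≤ m → m < n → (g ^ m) [x] ≠ [x]) →
      ∀ y : X, (g ^ n) [y] = [y]

/-- A bounded automata group in reduced form, with distinguished generating set `Y`. -/
def ReducedForm {X : Type u} (G : Subgroup (Equiv.Perm (List X)))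
    (Y : Set (Equiv.Perm (List X))) : Prop :=
  Y.Finite ∧ Subgroup.closure Y = G ∧
    ∀ g ∈ Y, (∀ x : X, secAt g [x] = 1) ∨
      ((∀ x : X, secAt g [x] = g ∨ ∃ h ∈ G, secAt g [x] = embed1 (perm1 h)) ∧
        ∃! x : X, secAt g [x] = g)

/-- A group of abelian wreath type, with distinguished (self-similar) generating set `Y`. -/
def AbelianWreathType {X : Type u} (G : Subgroup (Equiv.Perm (List X)))
    (Y : Set (Equiv.Perm (List X))) : Prop :=
  G ≤ treeAut X ∧
  (∀ g ∈ G, ∀ h ∈ G, perm1 g * perm1 h = perm1 h * perm1 g) ∧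
  Y.Finite ∧ Subgroup.closure Y = G ∧
  (∀ g ∈ Y, ∀ x : X, secAt g [x] ∈ Y) ∧
  ∀ g ∈ Y, (∀ x : X, secAt g [x] = 1) ∨
    ((∀ x : X, secAt g [x] = g ∨ ∃ h ∈ G, secAt g [x] = embed1 (perm1 h)) ∧
      ∃! x : X, secAt g [x] = g)

/-- The setoid on `X` whose classes are the orbits of `⟨σ⟩`, i.e. the cycles (including
length-one cycles) in the complete cycle decomposition of `σ`. -/
def cycleSetoid {X : Type u} (σ : Equiv.Perm X) : Setoid X where
  r x y := ∃ n : ℤ, (σ ^ n) x = y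
  iseqv := by
    constructor
    · exact fun x => ⟨0, by simp⟩
    · rintro x y ⟨n, rfl⟩
      exact ⟨-n, by rw [← Equiv.Perm.mul_apply, ← zpow_add, neg_add_cancel, zpow_zero,
        Equiv.Perm.one_apply]⟩
    · rintro x y z ⟨n, rfl⟩ ⟨m, rfl⟩
      exact ⟨m + n, by rw [← Equiv.Perm.mul_apply, ← zpow_add]⟩

/-- The vertex set of the cycle graph of a sequence of permutations: elements of `X`
together with the cycles of the permutations. -/
def CycleVertex {X : Type u} {ι : Type v} (σ : ι → Equiv.Perm X) : Type (max u v) :=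
  X ⊕ Σ i : ι, Quotient (cycleSetoid (σ i))

/-- The cycle graph of a sequence of permutations of `X`: a bipartite graph on
`X ⊔ {cycles}`, with an edge between `x ∈ X` and a cycle whenever `x` appears in it. -/
def cycleGraph {X : Type u} {ι : Type v} (σ : ι → Equiv.Perm X) :
    SimpleGraph (CycleVertex σ) where
  Adj a b := ∃ (x : X) (p : Σ i : ι, Quotient (cycleSetoid (σ i))),
      Quotient.mk (cycleSetoid (σ p.1)) x = p.2 ∧
      ((a = Sum.inl x ∧ b = Sum.inr p) ∨ (a = Sum.inr p ∧ b = Sum.inl x))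
  symm := by
    constructor
    rintro a b ⟨x, p, hx, h | h⟩ <;> exact ⟨x, p, hx, by tauto⟩
  loopless := by
    constructor
    rintro a ⟨x, p, hx, ⟨h1, h2⟩ | ⟨h1, h2⟩⟩ <;> simp_all

/-- A sequence of permutations of `X` is tree-like if its cycle graph is a tree. -/
def TreeLike {X : Type u} {ι : Type v} (σ : ι → Equiv.Perm X) : Prop :=
  (cycleGraph σ).IsTree

/-- A kneading automata group, with distinguished generating set `Y`. -/
def Kneading {X : Type u} (G : Subgroup (Equiv.Perm (List X)))
    (Y : Set (Equiv.Perm (List X))) : Prop :=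
  G ≤ treeAut X ∧ Y.Finite ∧ Subgroup.closure Y = G ∧
  (∀ g ∈ Y, ∀ x : X, secAt g [x] ∈ Y) ∧
  (∀ h ∈ Y, h ≠ 1 → ∃! p : Equiv.Perm (List X) × X, p.1 ∈ Y ∧ secAt p.1 [p.2] = h) ∧
  (∀ h ∈ Y, ∀ x y : X, (∃ n : ℤ, ((perm1 h) ^ n) x = y) →
      secAt h [x] ≠ 1 → secAt h [y] ≠ 1 → x = y) ∧
  TreeLike (fun h : {h : Equiv.Perm (List X) // h ∈ Y ∧ h ≠ 1} => perm1 h.1)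

/-- A group is virtually abelian if it has an abelian subgroup of finite index. -/
def VirtuallyAbelian (G : Type u) [Group G] : Prop :=
  ∃ H : Subgroup G, H.FiniteIndex ∧ ∀ a b : ↥H, a * b = b * a

/-- A group is locally finite if all of its finitely generated subgroups are finite. -/
def LocallyFiniteGroup (G : Type u) [Group G] : Prop :=
  ∀ H : Subgroup G, H.FG → Finite ↥H

/-- The class of elementary amenable groups: the smallest class of groups containing all
finite groups and all abelian groups and closed under subgroups (equivalently, injective
homomorphisms), quotients (equivalently, surjective homomorphisms), group extensions and
directed unions. -/
inductive ElementaryAmenable : ∀ (G : Type u) [inst : Group G], Prop where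
  | of_finite (G : Type u) [Group G] (h : Finite G) : ElementaryAmenable G
  | of_comm (G : Type u) [Group G] (h : ∀ a b : G, a * b = b * a) : ElementaryAmenable G
  | of_injective (G H : Type u) [Group G] [Group H] (f : G →* H)
      (hf : Function.Injective f) (hH : ElementaryAmenable H) : ElementaryAmenable G
  | of_surjective (G H : Type u) [Group G] [Group H] (f : G →* H)
      (hf : Function.Surjective f) (hG : ElementaryAmenable G) : ElementaryAmenable H
  | of_extension (G : Type u) [Group G] (N : Subgroup G) [N.Normal]
      (hN : ElementaryAmenable ↥N) (hQ : ElementaryAmenable (G ⧸ N)) :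
      ElementaryAmenable G
  | of_directedUnion (G : Type u) [Group G] (ι : Type u) (H : ι → Subgroup G)
      (hdir : Directed (· ≤ ·) H) (hsup : (⨆ i, H i) = ⊤)
      (h : ∀ i, ElementaryAmenable ↥(H i)) : ElementaryAmenable G

/-- The ordinal-indexed hierarchy of elementary amenable groups: `EG₀` consists of the
groups that are finite or abelian (closed under isomorphism); `EG_{α+1}` consists of the
`EG_α`-by-`EG₀` groups together with the directed unions of `EG_α` groups; and
`EG_λ = ⋃_{β<λ} EG_β` for `λ` a limit. -/
inductive InEG : Ordinal.{u} → ∀ (G : Type u) [inst : Group G], Prop where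
  | base (G : Type u) [Group G] (h : Finite G ∨ ∀ a b : G, a * b = b * a) : InEG 0 G
  | iso (α : Ordinal.{u}) (G H : Type u) [Group G] [Group H] (e : G ≃* H)
      (h : InEG α G) : InEG α H
  | succ_ext (α : Ordinal.{u}) (G : Type u) [Group G] (N : Subgroup G) [N.Normal]
      (hN : InEG α ↥N)
      (hQ : Finite (G ⧸ N) ∨ ∀ a b : G ⧸ N, a * b = b * a) : InEG (α + 1) G
  | succ_lim (α : Ordinal.{u}) (G : Type u) [Group G] (ι : Type u) (H : ι → Subgroup G)
      (hdir : Directed (· ≤ ·) H) (hsup : (⨆ i, H i) = ⊤)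
      (h : ∀ i, InEG α ↥(H i)) : InEG (α + 1) G
  | limit (α β : Ordinal.{u}) (G : Type u) [Group G] (hα : Order.IsSuccLimit α) (hβ : β < α)
      (h : InEG β G) : InEG α G

/-- The construction rank of an elementary amenable group: the least ordinal `α` with
`G ∈ EG_α`. -/
noncomputable def egRank (G : Type u) [Group G] : Ordinal.{u} :=
  sInf {α : Ordinal.{u} | InEG α G}

/-- `M` is a normal subgroup of `H` (both viewed inside a common ambient group). -/
def NormalIn {G : Type u} [Group G] (M H : Subgroup G) : Prop :=
  M ≤ H ∧ ∀ h ∈ H, ∀ m ∈ M, h * m * h⁻¹ ∈ M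

/-- The verbal subgroup of the subgroup `H` given by the word `γ`, viewed inside the
ambient group. -/
def verbalIn {G : Type u} [Group G] {n : ℕ} (γ : FreeGroup (Fin n)) (H : Subgroup G) :
    Subgroup G :=
  Subgroup.closure {g | ∃ f : Fin n → G, (∀ i, f i ∈ H) ∧ FreeGroup.lift f γ = g}
/-- The subgroup of `ℤ → A` consisting of the finitely supported functions; this is the
restricted direct sum `⊕_{n ∈ ℤ} A` written multiplicatively. -/
def finSuppSubgroup (A : Type u) [CommGroup A] : Subgroup (ℤ → A) where
  carrier := {f | {n : ℤ | f n ≠ 1}.Finite}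
  one_mem' := by simp
  mul_mem' := by
    intro f g hf hg
    apply Set.Finite.subset (hf.union hg)
    intro n hn
    simp only [Set.mem_setOf_eq, Pi.mul_apply, Set.mem_union] at hn ⊢
    by_contra hc
    push_neg at hc
    exact hn (by rw [hc.1, hc.2, one_mul])
  inv_mem' := by
    intro f hf
    simpa using hf

/-- The shift by `k` on `⊕_{n ∈ ℤ} A`, as a group automorphism. -/
def shiftBy (A : Type u) [CommGroup A] (k : ℤ) :
    ↥(finSuppSubgroup A) ≃* ↥(finSuppSubgroup A) where
  toFun f := ⟨fun n => (f : ℤ → A) (n - k),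
    Set.Finite.preimage (Function.Injective.injOn (fun a b h => by omega)) f.2⟩
  invFun f := ⟨fun n => (f : ℤ → A) (n + k),
    Set.Finite.preimage (Function.Injective.injOn (fun a b h => by omega)) f.2⟩
  left_inv f := Subtype.ext (funext fun n => congrArg (f : ℤ → A) (by omega))
  right_inv f := Subtype.ext (funext fun n => congrArg (f : ℤ → A) (by omega))
  map_mul' f g := rfl

/-- The shift action of `ℤ` on `⊕_{n ∈ ℤ} A`. -/
def shiftHom (A : Type u) [CommGroup A] :
    Multiplicative ℤ →* MulAut ↥(finSuppSubgroup A) :=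
  MonoidHom.mk' (fun k => shiftBy A k.toAdd) (by
    intro k l
    refine MulEquiv.ext fun f => Subtype.ext (funext fun n => ?_)
    show (f : ℤ → A) (n - (Multiplicative.toAdd k + Multiplicative.toAdd l)) =
      (f : ℤ → A) (n - Multiplicative.toAdd k - Multiplicative.toAdd l)
    exact congrArg (f : ℤ → A) (by omega))

/-- The restricted wreath product `A ≀ ℤ = (⊕_{n ∈ ℤ} A) ⋊ ℤ`, where `ℤ` acts by shifting
coordinates. -/
def wreathZ (A : Type u) [CommGroup A] : Type u :=
  SemidirectProduct ↥(finSuppSubgroup A) (Multiplicative ℤ) (shiftHom A)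

instance (A : Type u) [CommGroup A] : Group (wreathZ A) :=
  inferInstanceAs (Group (SemidirectProduct ↥(finSuppSubgroup A) (Multiplicative ℤ)
    (shiftHom A)))

/-!
Let `τ : G → ℤ` be the projection `A ≀ ℤ → ℤ` transported to `G = φ(A ≀ ℤ)`. The sections at a
vertex `x` of the degree-zero stabilizer of `x` form an abelian normal subgroup of `sec_G(x) = G`; in `A ≀ ℤ`
such a subgroup lies in the base, so sections of degree-zero elements have degree zero. Hence on
the stabilizer of `x` the degree is proportional to the degree of the section at `x`:
`τ h = M * τ (h_x)`, with `M` independent of `x` by transitivity. For an element `t` of degree `1`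
this gives `M ^ n * ∑_{|v| = n} τ (t_v) = |X| ^ n`; boundedness and finite state keep the sums
bounded, so `|M| = |X|`. Then first-level stabilizers have degrees divisible by `|X|`, so `t`
cycles through `X` and every degree-zero element fixes the first level. Its sections again have
degree zero, so it fixes the whole tree: the base group acts trivially, contradicting faithfulness.
-/

open Function
open scoped commutatorElement

section

variable {X : Type u} {g h : Equiv.Perm (List X)} {v : List X}

namespace treeAut

theorem apply_nil (hg : g ∈ treeAut X) : g [] = [] := by
  simpa using (hg [] (g⁻¹ [])).mp List.nil_prefix

theorem length_le_length_apply (hg : g ∈ treeAut X) (w : List X) :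
    w.length ≤ (g w).length := by
  induction w using List.reverseRecOn with
  | nil => simp
  | append_singleton w x ih =>
    have hpre : g w <+: g (w ++ [x]) := (hg w (w ++ [x])).mp (List.prefix_append w [x])
    have hne : g w ≠ g (w ++ [x]) := fun h => by simpa using g.injective h
    have hlt := lt_of_le_of_ne hpre.length_le fun hl => hne (hpre.eq_of_length hl)
    simp only [List.length_append, List.length_singleton]
    omega

theorem length_apply (hg : g ∈ treeAut X) (w : List X) : (g w).length = w.length := by
  have h₁ := length_le_length_apply hg w
  have h₂ := length_le_length_apply (inv_mem hg) (g w)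
  simp only [Equiv.Perm.coe_inv, Equiv.symm_apply_apply] at h₂
  omega

theorem apply_append_eq_append_drop (hg : g ∈ treeAut X) (u w : List X) :
    g (u ++ w) = g u ++ (g (u ++ w)).drop u.length := by
  obtain ⟨r, hr⟩ := (hg u (u ++ w)).mp (List.prefix_append u w)
  rw [← hr, ← length_apply hg u, List.drop_left]

theorem exists_section (hg : g ∈ treeAut X) (v : List X) :
    ∃ s : Equiv.Perm (List X), ∀ w, g (v ++ w) = g v ++ s w := by
  have hinv : ∀ r, g⁻¹ (g v ++ r) = v ++ (g⁻¹ (g v ++ r)).drop v.length := by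
    intro r
    have := apply_append_eq_append_drop (inv_mem hg) (g v) r
    simp only [Equiv.Perm.coe_inv, Equiv.symm_apply_apply, length_apply hg] at this ⊢
    exact this
  refine ⟨⟨fun w => (g (v ++ w)).drop v.length, fun r => (g⁻¹ (g v ++ r)).drop v.length,
    fun w => ?_, fun r => ?_⟩, apply_append_eq_append_drop hg v⟩
  · simp only [← apply_append_eq_append_drop hg v w, Equiv.Perm.coe_inv,
      Equiv.symm_apply_apply, List.drop_left]
  · have : g (v ++ (g⁻¹ (g v ++ r)).drop v.length) = g v ++ r := by
      rw [← hinv]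
      simp
    change (g (v ++ (g⁻¹ (g v ++ r)).drop v.length)).drop v.length = r
    rw [this, ← length_apply hg v, List.drop_left]

theorem apply_append (hg : g ∈ treeAut X) (v w : List X) :
    g (v ++ w) = g v ++ secAt g v w := by
  rw [secAt, dif_pos (exists_section hg v)]
  exact (exists_section hg v).choose_spec w

theorem secAt_eq (hg : g ∈ treeAut X) {v : List X} {s : Equiv.Perm (List X)}
    (hs : ∀ w, g (v ++ w) = g v ++ s w) : secAt g v = s :=
  Equiv.ext fun w => List.append_cancel_left ((apply_append hg v w).symm.trans (hs w))

theorem apply_singleton (hg : g ∈ treeAut X) (x : X) : g [x] = [perm1 g x] := by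
  have hex : ∀ k ∈ treeAut X, ∀ x : X, ∃ y, k [x] = [y] := fun k hk x =>
    List.length_eq_one_iff.mp (length_apply hk [x])
  choose f hf using hex g hg
  choose f' hf' using hex g⁻¹ (inv_mem hg)
  have hσ : ∃ σ : Equiv.Perm X, ∀ x, g [x] = [σ x] := by
    refine ⟨⟨f, f', fun x => ?_, fun y => ?_⟩, hf⟩
    · have := hf' (f x)
      rw [← hf x] at this
      simpa using this.symm
    · have := hf (f' y)
      rw [← hf' y] at this
      simpa using this.symm
  rw [perm1, dif_pos hσ]
  exact hσ.choose_spec x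

theorem pow_apply_singleton (hg : g ∈ treeAut X) (n : ℕ) (x : X) :
    (g ^ n) [x] = [(perm1 g ^ n) x] := by
  induction n generalizing x with
  | zero => simp
  | succ n ih => rw [pow_succ, Equiv.Perm.mul_apply, apply_singleton hg, ih, pow_succ]; rfl

end treeAut

open treeAut

theorem secAt_mem_treeAut (hg : g ∈ treeAut X) (v : List X) : secAt g v ∈ treeAut X := by
  intro a b
  rw [← List.prefix_append_right_inj v, hg, apply_append hg, apply_append hg,
    List.prefix_append_right_inj]

@[simp]
theorem secAt_one (v : List X) : secAt (1 : Equiv.Perm (List X)) v = 1 :=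
  secAt_eq (one_mem _) fun w => by simp

theorem secAt_nil (hg : g ∈ treeAut X) : secAt g [] = g :=
  secAt_eq hg fun w => by simp [apply_nil hg]

theorem secAt_mul (hg : g ∈ treeAut X) (hh : h ∈ treeAut X) (v : List X) :
    secAt (g * h) v = secAt g (h v) * secAt h v :=
  secAt_eq (mul_mem hg hh) fun w => by
    simp only [Equiv.Perm.mul_apply, apply_append hh, apply_append hg]

theorem secAt_append (hg : g ∈ treeAut X) (u v : List X) :
    secAt g (u ++ v) = secAt (secAt g u) v :=
  secAt_eq hg fun w => by
    rw [List.append_assoc, apply_append hg, apply_append (secAt_mem_treeAut hg u),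
      apply_append hg, List.append_assoc]

theorem secAt_inv (hg : g ∈ treeAut X) (v : List X) :
    secAt g⁻¹ (g v) = (secAt g v)⁻¹ := by
  have := secAt_mul (inv_mem hg) hg v
  rw [inv_mul_cancel, secAt_one] at this
  exact eq_inv_of_mul_eq_one_left this.symm

theorem secAt_conj (hg : g ∈ treeAut X) (hh : h ∈ treeAut X) {w : List X} (hgv : g v = w)
    (hhv : h v = v) : secAt (g * h * g⁻¹) w = secAt g v * secAt h v * (secAt g v)⁻¹ := by
  have hgw : g⁻¹ w = v := by rw [← hgv]; simp
  rw [secAt_mul (mul_mem hg hh) (inv_mem hg), secAt_mul hg hh, hgw, hhv, ← hgv, secAt_inv hg]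

noncomputable def sectionHom (v : List X) :
    ↥(treeAut X ⊓ MulAction.stabilizer (Equiv.Perm (List X)) v) →* Equiv.Perm (List X) where
  toFun g := secAt g v
  map_one' := secAt_one v
  map_mul' g h := by
    have hhv : (h : Equiv.Perm (List X)) v = v := h.2.2
    simp only [Subgroup.coe_mul, secAt_mul g.2.1 h.2.1, hhv]

theorem secAt_zpow (hg : g ∈ treeAut X) (hgv : g v = v) (n : ℤ) :
    secAt (g ^ n) v = secAt g v ^ n :=
  map_zpow (sectionHom v) ⟨g, hg, hgv⟩ n

theorem conj_apply_eq_self_of_apply_eq {w : List X} (hgv : g v = w) (hhv : h v = v) :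
    (g * h * g⁻¹) w = w := by
  rw [Equiv.Perm.mul_apply, Equiv.Perm.mul_apply, Equiv.Perm.inv_eq_iff_eq.mpr hgv.symm, hhv, hgv]

section SecImage

variable {G H : Subgroup (Equiv.Perm (List X))} {s t b : Equiv.Perm (List X)}

theorem mul_mem_secImage (hH : H ≤ treeAut X) (hs : s ∈ secImage H v) (ht : t ∈ secImage H v) :
    s * t ∈ secImage H v := by
  obtain ⟨k, hk, hkv, rfl⟩ := hs
  obtain ⟨l, hl, hlv, rfl⟩ := ht
  exact ⟨k * l, mul_mem hk hl, by rw [Equiv.Perm.mul_apply, hlv, hkv],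
    by rw [secAt_mul (hH hk) (hH hl), hlv]⟩

theorem inv_mem_secImage (hH : H ≤ treeAut X) (hs : s ∈ secImage H v) : s⁻¹ ∈ secImage H v := by
  obtain ⟨k, hk, hkv, rfl⟩ := hs
  refine ⟨k⁻¹, inv_mem hk, Equiv.Perm.inv_eq_iff_eq.mpr hkv.symm, ?_⟩
  have := secAt_inv (hH hk) v
  rwa [hkv] at this

theorem conj_mem_secImage (hG : G ≤ treeAut X) (hH : H ≤ treeAut X)
    (hHG : ∀ g ∈ G, ∀ k ∈ H, g * k * g⁻¹ ∈ H) (hb : b ∈ secImage G v)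
    (hs : s ∈ secImage H v) : b * s * b⁻¹ ∈ secImage H v := by
  obtain ⟨B, hB, hBv, rfl⟩ := hb
  obtain ⟨k, hk, hkv, rfl⟩ := hs
  exact ⟨B * k * B⁻¹, hHG B hB k hk, conj_apply_eq_self_of_apply_eq hBv hkv,
    secAt_conj (hG hB) (hH hk) hBv hkv⟩

theorem commute_of_mem_secImage (hH : H ≤ treeAut X)
    (hcomm : ∀ k ∈ H, ∀ l ∈ H, Commute k l) (hs : s ∈ secImage H v) (ht : t ∈ secImage H v) :
    Commute s t := by
  obtain ⟨k, hk, hkv, rfl⟩ := hs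
  obtain ⟨l, hl, hlv, rfl⟩ := ht
  have := congrArg (secAt · v) (hcomm k hk l hl).eq
  simp only [secAt_mul (hH hk) (hH hl), secAt_mul (hH hl) (hH hk), hkv, hlv] at this
  exact this

end SecImage

def IsGrading (G : Subgroup (Equiv.Perm (List X))) (τ : Equiv.Perm (List X) → ℤ) : Prop :=
  ∀ g ∈ G, ∀ h ∈ G, τ (g * h) = τ g + τ h

namespace IsGrading

variable {G : Subgroup (Equiv.Perm (List X))} {τ : Equiv.Perm (List X) → ℤ}

theorem map_one (hτ : IsGrading G τ) : τ 1 = 0 := by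
  have := hτ 1 (one_mem G) 1 (one_mem G)
  rw [mul_one] at this
  omega

theorem map_inv (hτ : IsGrading G τ) (hg : g ∈ G) : τ g⁻¹ = -τ g := by
  have := hτ g hg g⁻¹ (inv_mem hg)
  rw [mul_inv_cancel, hτ.map_one] at this
  omega

theorem map_zpow (hτ : IsGrading G τ) (hg : g ∈ G) (n : ℤ) : τ (g ^ n) = n * τ g := by
  induction n using Int.induction_on with
  | zero => simp [hτ.map_one]
  | succ i ih => rw [zpow_add_one, hτ _ (zpow_mem hg _) _ hg, ih]; ring
  | pred i ih =>
    rw [zpow_sub_one, hτ _ (zpow_mem hg _) _ (inv_mem hg), ih, hτ.map_inv hg]; ring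

theorem map_pow (hτ : IsGrading G τ) (hg : g ∈ G) (n : ℕ) : τ (g ^ n) = n * τ g := by
  simpa using hτ.map_zpow hg n

theorem map_conj (hτ : IsGrading G τ) (hg : g ∈ G) (hh : h ∈ G) : τ (g * h * g⁻¹) = τ h := by
  rw [hτ _ (mul_mem hg hh) _ (inv_mem hg), hτ _ hg _ hh, hτ.map_inv hg]
  ring

def ker (hτ : IsGrading G τ) : Subgroup (Equiv.Perm (List X)) where
  carrier := {g | g ∈ G ∧ τ g = 0}
  one_mem' := ⟨one_mem G, hτ.map_one⟩
  mul_mem' := fun ⟨hg, hg0⟩ ⟨hh, hh0⟩ => ⟨mul_mem hg hh, by rw [hτ _ hg _ hh, hg0, hh0, add_zero]⟩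
  inv_mem' := fun ⟨hg, hg0⟩ => ⟨inv_mem hg, by rw [hτ.map_inv hg, hg0, neg_zero]⟩

theorem conj_mem_ker (hτ : IsGrading G τ) : ∀ g ∈ G, ∀ k ∈ hτ.ker, g * k * g⁻¹ ∈ hτ.ker :=
  fun _ hg _ ⟨hk, hk0⟩ => ⟨mul_mem (mul_mem hg hk) (inv_mem hg), by rw [hτ.map_conj hg hk, hk0]⟩

end IsGrading

/-- Abstracts the projection `A ≀ ℤ → ℤ`. The last field is a concrete form of "every abelian
normal subgroup of `G` lies in the kernel". -/
structure IsWreathGrading (G : Subgroup (Equiv.Perm (List X))) (τ : Equiv.Perm (List X) → ℤ) :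
    Prop where
  isGrading : IsGrading G τ
  commute : ∀ g ∈ G, ∀ h ∈ G, τ g = 0 → τ h = 0 → Commute g h
  not_commute_commutator : ∀ z ∈ G, τ z ≠ 0 → ∃ b ∈ G, τ b = 0 ∧ ¬Commute ⁅b, z⁆ z

namespace IsWreathGrading

variable {G : Subgroup (Equiv.Perm (List X))} {τ : Equiv.Perm (List X) → ℤ}

/-- The sections at `v` of the degree-zero stabilizer of `v` form an abelian normal subgroup
of `sec_G(v) = G`, which must lie in the kernel. -/
theorem grading_secAt_eq_zero (hτ : IsWreathGrading G τ) (hG : G ≤ treeAut X)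
    (hss : SelfSimilarSub G) (hv : secImage G v = G) (hh : h ∈ G) (hhv : h v = v)
    (h0 : τ h = 0) : τ (secAt h v) = 0 := by
  by_contra hz
  obtain ⟨b, hb, -, hnc⟩ := hτ.not_commute_commutator _ (hss h hh v) hz
  set K := hτ.isGrading.ker
  have hK : K ≤ treeAut X := fun k hk => hG hk.1
  have hzK : secAt h v ∈ secImage K v := ⟨h, ⟨hh, h0⟩, hhv, rfl⟩
  have hbG : b ∈ secImage G v := by rw [hv]; exact hb
  have hcK : ⁅b, secAt h v⁆ ∈ secImage K v := by
    rw [commutatorElement_def]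
    exact mul_mem_secImage hK (conj_mem_secImage hG hK hτ.isGrading.conj_mem_ker hbG hzK)
      (inv_mem_secImage hK hzK)
  exact hnc (commute_of_mem_secImage hK
    (fun k hk l hl => hτ.commute k hk.1 l hl.1 hk.2 hl.2) hcK hzK)

/-- The map `h ↦ τ (h_v)` on the stabilizer of `v` kills the kernel of `τ`, so it is
proportional to `τ`; the constant is read off an element `H` with `τ (H_v) = 1`. -/
theorem grading_eq_mul_grading_secAt (hτ : IsWreathGrading G τ) (hG : G ≤ treeAut X)
    (hss : SelfSimilarSub G) (hv : secImage G v = G) {H : Equiv.Perm (List X)} (hH : H ∈ G)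
    (hHv : H v = v) (hH1 : τ (secAt H v) = 1) (hh : h ∈ G) (hhv : h v = v) :
    τ h = τ H * τ (secAt h v) := by
  have hτ' := hτ.isGrading
  set k := h ^ τ H * H ^ (-τ h)
  have hkG : k ∈ G := mul_mem (zpow_mem hh _) (zpow_mem hH _)
  have hkv : k v = v := by
    rw [Equiv.Perm.mul_apply, Equiv.Perm.zpow_apply_eq_self_of_apply_eq_self hHv,
      Equiv.Perm.zpow_apply_eq_self_of_apply_eq_self hhv]
  have hk0 : τ k = 0 := by
    rw [hτ' _ (zpow_mem hh _) _ (zpow_mem hH _), hτ'.map_zpow hh, hτ'.map_zpow hH]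
    ring
  have := hτ.grading_secAt_eq_zero hG hss hv hkG hkv hk0
  rw [secAt_mul (hG (zpow_mem hh _)) (hG (zpow_mem hH _)),
    Equiv.Perm.zpow_apply_eq_self_of_apply_eq_self hHv, secAt_zpow (hG hh) hhv,
    secAt_zpow (hG hH) hHv, hτ' _ (zpow_mem (hss h hh v) _) _ (zpow_mem (hss H hH v) _),
    hτ'.map_zpow (hss h hh v), hτ'.map_zpow (hss H hH v), hH1] at this
  linarith

theorem exists_grading_eq_mul_grading_secAt [Nonempty X] (hτ : IsWreathGrading G τ)
    (hG : G ≤ treeAut X) (hSR : SelfReplicating G) {t : Equiv.Perm (List X)} (ht : t ∈ G)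
    (hτt : τ t = 1) :
    ∃ M : ℤ, ∀ x : X, ∀ h ∈ G, h [x] = [x] → τ h = M * τ (secAt h [x]) := by
  obtain ⟨hss, htr, hsec⟩ := hSR
  have hH : ∀ x : X, t ∈ secImage G [x] := fun x => (hsec x).symm ▸ ht
  choose H hHG hHx hHt using hH
  have key : ∀ x, ∀ h ∈ G, h [x] = [x] → τ h = τ (H x) * τ (secAt h [x]) :=
    fun x h hh hhx => hτ.grading_eq_mul_grading_secAt hG hss (hsec x) (hHG x) (hHx x)
      (by rw [hHt x, hτt]) hh hhx
  have hconst : ∀ x y, τ (H x) = τ (H y) := by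
    intro x y
    obtain ⟨g, hg, hgxy⟩ := htr x y
    have := key y _ (mul_mem (mul_mem hg (hHG x)) (inv_mem hg))
      (conj_apply_eq_self_of_apply_eq hgxy (hHx x))
    rwa [hτ.isGrading.map_conj hg (hHG x), secAt_conj (hG hg) (hG (hHG x)) hgxy (hHx x), hHt x,
      hτ.isGrading.map_conj (hss g hg [x]) ht, hτt, mul_one] at this
  obtain ⟨x₀⟩ := ‹Nonempty X›
  exact ⟨τ (H x₀), fun x h hh hhx => hconst x x₀ ▸ key x h hh hhx⟩

end IsWreathGrading

theorem Int.natAbs_le_one_of_forall_natAbs_pow_le {r : ℤ} {B : ℕ}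
    (h : ∀ n, 1 ≤ n → (r ^ n).natAbs ≤ B) : r.natAbs ≤ 1 := by
  by_contra! hr
  have h₁ := h (B + 1) (by omega)
  have h₂ : B + 1 < r.natAbs ^ (B + 1) := Nat.lt_pow_self hr
  rw [Int.natAbs_pow] at h₁
  omega

section LevelSum

variable (X) in
noncomputable def level [Finite X] (n : ℕ) : Finset (List X) :=
  (List.finite_length_eq X n).toFinset

theorem mem_level [Finite X] {n : ℕ} : v ∈ level X n ↔ v.length = n :=
  Set.Finite.mem_toFinset _

theorem level_zero [Finite X] : level X 0 = {[]} := by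
  ext v
  simp [mem_level]

theorem sum_level_succ [Fintype X] {M : Type*} [AddCommMonoid M] (n : ℕ) (f : List X → M) :
    ∑ v ∈ level X (n + 1), f v = ∑ x, ∑ w ∈ level X n, f (x :: w) := by
  rw [← Finset.sum_product']
  symm
  refine Finset.sum_bij (fun p _ => p.1 :: p.2) (fun p hp => ?_) (fun p _ q _ hpq => ?_)
    (fun v hv => ?_) (fun _ _ => rfl)
  · simpa [mem_level] using hp
  · simpa [Prod.ext_iff] using hpq
  · obtain ⟨x, w, rfl⟩ := List.exists_cons_of_length_eq_add_one (mem_level.mp hv)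
    exact ⟨(x, w), by simpa [mem_level] using hv, rfl⟩

theorem sum_level_apply [Finite X] {M : Type*} [AddCommMonoid M] (hg : g ∈ treeAut X) (n : ℕ)
    (f : List X → M) : ∑ v ∈ level X n, f (g v) = ∑ v ∈ level X n, f v :=
  Finset.sum_equiv g (fun v => by simp [mem_level, length_apply hg]) fun _ _ => rfl

noncomputable def levelSum [Finite X] (τ : Equiv.Perm (List X) → ℤ) (n : ℕ)
    (g : Equiv.Perm (List X)) : ℤ :=
  ∑ v ∈ level X n, τ (secAt g v)

variable {τ : Equiv.Perm (List X) → ℤ}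

theorem levelSum_zero [Finite X] (hg : g ∈ treeAut X) : levelSum τ 0 g = τ g := by
  rw [levelSum, level_zero, Finset.sum_singleton, secAt_nil hg]

theorem levelSum_succ [Fintype X] (hg : g ∈ treeAut X) (n : ℕ) :
    levelSum τ (n + 1) g = ∑ x, levelSum τ n (secAt g [x]) := by
  rw [levelSum, sum_level_succ]
  refine Finset.sum_congr rfl fun x _ => Finset.sum_congr rfl fun w _ => ?_
  rw [← List.singleton_append, secAt_append hg]

theorem levelSum_one [Fintype X] (hg : g ∈ treeAut X) :
    levelSum τ 1 g = ∑ x, τ (secAt g [x]) := by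
  simp only [levelSum_succ hg, levelSum_zero (secAt_mem_treeAut hg _)]

theorem natAbs_levelSum_le [Finite X] (hτ : τ 1 = 0) (hb : IsBoundedAut g)
    (hfs : IsFiniteState g) : ∃ B : ℕ, ∀ n, 1 ≤ n → (levelSum τ n g).natAbs ≤ B := by
  classical
  obtain ⟨K, hK⟩ := hb
  obtain ⟨C, hC⟩ := (hfs.image fun s => (τ s).natAbs).bddAbove
  refine ⟨K * C, fun n hn => ?_⟩
  set S := (level X n).filter fun v => secAt g v ≠ 1
  have hS : S.card ≤ K := by
    have hSset : (S : Set (List X)) = {v | v.length = n ∧ secAt g v ≠ 1} := by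
      ext v
      simp [S, mem_level]
    simpa [← hSset] using hK n hn
  have hsum : levelSum τ n g = ∑ v ∈ S, τ (secAt g v) := by
    refine (Finset.sum_filter_of_ne (p := fun v => secAt g v ≠ 1) fun v _ hv h1 => hv ?_).symm
    rw [h1, hτ]
  calc (levelSum τ n g).natAbs
      ≤ ∑ v ∈ S, (τ (secAt g v)).natAbs := hsum ▸ Int.natAbs_sum_le _ _
    _ ≤ ∑ _v ∈ S, C := Finset.sum_le_sum fun v _ => hC ⟨secAt g v, ⟨v, rfl⟩, rfl⟩
    _ ≤ K * C := by rw [Finset.sum_const, smul_eq_mul]; exact Nat.mul_le_mul_right C hS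

namespace IsGrading

variable {G : Subgroup (Equiv.Perm (List X))}

theorem levelSum_mul [Finite X] (hτ : IsGrading G τ) (hG : G ≤ treeAut X)
    (hss : SelfSimilarSub G) (hg : g ∈ G) (hh : h ∈ G) (n : ℕ) :
    levelSum τ n (g * h) = levelSum τ n g + levelSum τ n h := by
  simp only [levelSum, secAt_mul (hG hg) (hG hh), hτ _ (hss g hg _) _ (hss h hh _),
    Finset.sum_add_distrib, sum_level_apply (hG hh) n fun w => τ (secAt g w)]

theorem levelSum_pow [Finite X] (hτ : IsGrading G τ) (hG : G ≤ treeAut X)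
    (hss : SelfSimilarSub G) (hg : g ∈ G) (n k : ℕ) :
    levelSum τ n (g ^ k) = k * levelSum τ n g := by
  induction k with
  | zero => simp [levelSum, hτ.map_one]
  | succ k ih => rw [pow_succ, hτ.levelSum_mul hG hss (pow_mem hg k) hg, ih]; push_cast; ring

variable {M : ℤ}

/-- Raise `g` to a power fixing the first level, where the hypothesis applies to every
vertex. -/
theorem mul_levelSum_one [Fintype X] (hτ : IsGrading G τ) (hG : G ≤ treeAut X)
    (hss : SelfSimilarSub G) (hM : ∀ x : X, ∀ h ∈ G, h [x] = [x] → τ h = M * τ (secAt h [x]))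
    (hg : g ∈ G) : M * levelSum τ 1 g = Fintype.card X * τ g := by
  set R := orderOf (perm1 g)
  have hfix : ∀ x : X, (g ^ R) [x] = [x] := fun x => by
    rw [pow_apply_singleton (hG hg), pow_orderOf_eq_one]
    rfl
  have hR : M * levelSum τ 1 (g ^ R) = Fintype.card X * τ (g ^ R) := by
    simp only [levelSum_one (hG (pow_mem hg R)), Finset.mul_sum,
      ← hM _ _ (pow_mem hg R) (hfix _), Finset.sum_const, Finset.card_univ, nsmul_eq_mul]
  rw [hτ.levelSum_pow hG hss hg, hτ.map_pow hg] at hR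
  have hR0 : (R : ℤ) ≠ 0 := by exact_mod_cast (orderOf_pos (perm1 g)).ne'
  apply mul_left_cancel₀ hR0
  linear_combination hR

theorem pow_mul_levelSum [Fintype X] (hτ : IsGrading G τ) (hG : G ≤ treeAut X)
    (hss : SelfSimilarSub G) (hM : ∀ x : X, ∀ h ∈ G, h [x] = [x] → τ h = M * τ (secAt h [x]))
    (n : ℕ) : ∀ g ∈ G, M ^ n * levelSum τ n g = Fintype.card X ^ n * τ g := by
  induction n with
  | zero => intro g hg; simp [levelSum_zero (hG hg)]
  | succ n ih =>
    intro g hg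
    calc M ^ (n + 1) * levelSum τ (n + 1) g
        = M * ∑ x, M ^ n * levelSum τ n (secAt g [x]) := by
          rw [levelSum_succ (hG hg), Finset.mul_sum, Finset.mul_sum]
          exact Finset.sum_congr rfl fun x _ => by ring
      _ = Fintype.card X ^ n * (M * levelSum τ 1 g) := by
          simp only [ih _ (hss g hg _), ← Finset.mul_sum, levelSum_one (hG hg)]
          ring
      _ = Fintype.card X ^ (n + 1) * τ g := by
          rw [hτ.mul_levelSum_one hG hss hM hg]
          ring

/-- `levelSum τ n t = (|X| / M) ^ n` stays bounded, so `|X| / M = ±1`. -/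
theorem natAbs_eq_card [Fintype X] [Nonempty X] (hτ : IsGrading G τ) (hG : G ≤ treeAut X)
    (hss : SelfSimilarSub G) (hM : ∀ x : X, ∀ h ∈ G, h [x] = [x] → τ h = M * τ (secAt h [x]))
    {t : Equiv.Perm (List X)} (ht : t ∈ G) (hτt : τ t = 1) (hb : IsBoundedAut t)
    (hfs : IsFiniteState t) : M.natAbs = Fintype.card X := by
  set r := levelSum τ 1 t
  have hq : M * r = Fintype.card X := by
    rw [hτ.mul_levelSum_one hG hss hM ht, hτt, mul_one]
  have hq0 : M * r ≠ 0 := by rw [hq]; exact_mod_cast Fintype.card_ne_zero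
  have hM0 : M ≠ 0 := left_ne_zero_of_mul hq0
  have hr : ∀ n, levelSum τ n t = r ^ n := fun n => by
    have := hτ.pow_mul_levelSum hG hss hM n t ht
    rw [hτt, mul_one, ← hq, mul_pow] at this
    exact mul_left_cancel₀ (pow_ne_zero n hM0) this
  obtain ⟨B, hB⟩ := natAbs_levelSum_le hτ.map_one hb hfs
  have hr1 : r.natAbs ≤ 1 := Int.natAbs_le_one_of_forall_natAbs_pow_le fun n hn => hr n ▸ hB n hn
  have hr0 : r ≠ 0 := right_ne_zero_of_mul hq0
  have := congrArg Int.natAbs hq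
  rw [Int.natAbs_mul, Int.natAbs_natCast] at this
  rw [← this, show r.natAbs = 1 by omega, mul_one]

end IsGrading

end LevelSum

theorem Equiv.Perm.exists_lt_card_pow_apply_eq {α : Type*} [Fintype α] (σ : Equiv.Perm α)
    (x : α) (hσ : ∀ d : ℕ, (σ ^ d) x = x → Fintype.card α ∣ d) (y : α) :
    ∃ j < Fintype.card α, (σ ^ j) x = y := by
  have hinj : Injective fun i : Fin (Fintype.card α) => (σ ^ (i : ℕ)) x := by
    intro i j hij
    wlog hlt : (i : ℕ) < j generalizing i j
    · rcases (not_lt.mp hlt).eq_or_lt with h | h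
      · exact Fin.ext h.symm
      · exact (this hij.symm h).symm
    have hper : (σ ^ ((j : ℕ) - i)) x = x := by
      apply (σ ^ (i : ℕ)).injective
      rw [← Equiv.Perm.mul_apply, ← pow_add, Nat.add_sub_cancel' hlt.le]
      exact hij.symm
    have := Nat.le_of_dvd (Nat.sub_pos_of_lt hlt) (hσ _ hper)
    omega
  obtain ⟨j, hj⟩ := ((Fintype.bijective_iff_injective_and_card _).mpr
    ⟨hinj, Fintype.card_fin _⟩).2 y
  exact ⟨j, j.2, hj⟩

/-- `t` cycles through all of `X`, since `t ^ d` fixes a letter only if `|X| ∣ d`; so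
`b [x] = t ^ j [x]` with `j < |X|`, and `|X| ∣ τ (t ^ (-j) * b) = -j` forces `j = 0`. -/
theorem IsGrading.apply_singleton_eq_self [Fintype X] {G : Subgroup (Equiv.Perm (List X))}
    {τ : Equiv.Perm (List X) → ℤ} (hτ : IsGrading G τ) (hG : G ≤ treeAut X)
    {t : Equiv.Perm (List X)} (ht : t ∈ G) (hτt : τ t = 1)
    (hdvd : ∀ x : X, ∀ h ∈ G, h [x] = [x] → (Fintype.card X : ℤ) ∣ τ h)
    {b : Equiv.Perm (List X)} (hb : b ∈ G) (hb0 : τ b = 0) (x : X) : b [x] = [x] := by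
  have hσ : ∀ d : ℕ, (perm1 t ^ d) x = x → Fintype.card X ∣ d := fun d hd => by
    have := hdvd x _ (pow_mem ht d) (by rw [pow_apply_singleton (hG ht), hd])
    rwa [hτ.map_pow ht, hτt, mul_one, Int.natCast_dvd_natCast] at this
  obtain ⟨j, hjlt, hj⟩ := (perm1 t).exists_lt_card_pow_apply_eq x hσ (perm1 b x)
  have htj : t ^ j ∈ G := pow_mem ht j
  have hfix : ((t ^ j)⁻¹ * b) [x] = [x] := by
    rw [Equiv.Perm.mul_apply, apply_singleton (hG hb), ← hj, ← pow_apply_singleton (hG ht)]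
    simp
  have := hdvd x _ (mul_mem (inv_mem htj) hb) hfix
  rw [hτ _ (inv_mem htj) _ hb, hτ.map_inv htj, hτ.map_pow ht, hτt, hb0, mul_one, add_zero,
    dvd_neg, Int.natCast_dvd_natCast] at this
  rw [apply_singleton (hG hb), ← hj, Nat.eq_zero_of_dvd_of_lt this hjlt, pow_zero]
  rfl

theorem IsWreathGrading.eq_one_of_grading_eq_zero [Finite X] [Nonempty X]
    {G : Subgroup (Equiv.Perm (List X))} {τ : Equiv.Perm (List X) → ℤ}
    (hτ : IsWreathGrading G τ) (hG : G ≤ treeAut X) (hSR : SelfReplicating G)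
    {t : Equiv.Perm (List X)} (ht : t ∈ G) (hτt : τ t = 1) (htb : IsBoundedAut t)
    (htfs : IsFiniteState t) {b : Equiv.Perm (List X)} (hb : b ∈ G) (hb0 : τ b = 0) : b = 1 := by
  have := Fintype.ofFinite X
  obtain ⟨M, hM⟩ := hτ.exists_grading_eq_mul_grading_secAt hG hSR ht hτt
  obtain ⟨hss, -, hsec⟩ := hSR
  have hMq := hτ.isGrading.natAbs_eq_card hG hss hM ht hτt htb htfs
  have hdvd : ∀ x : X, ∀ h ∈ G, h [x] = [x] → (Fintype.card X : ℤ) ∣ τ h :=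
    fun x h hh hhx => hM x h hh hhx ▸ hMq ▸ (Int.natAbs_dvd.mpr dvd_rfl).mul_right _
  suffices ∀ w, ∀ b ∈ G, τ b = 0 → b w = w from Equiv.ext fun w => this w b hb hb0
  intro w
  induction w with
  | nil => exact fun b hb _ => apply_nil (hG hb)
  | cons x w ih =>
    intro b hb hb0
    have hbx := hτ.isGrading.apply_singleton_eq_self hG ht hτt hdvd hb hb0 x
    rw [← List.singleton_append, apply_append (hG hb), hbx,
      ih _ (hss b hb [x]) (hτ.grading_secAt_eq_zero hG hss (hsec x) hb hbx hb0)]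

theorem isWreathGrading_range {Γ : Type*} [Group Γ] {φ : Γ →* Equiv.Perm (List X)}
    (hφ : Injective φ) (ρ : Γ →* Multiplicative ℤ)
    (hcomm : ∀ a b, ρ a = 1 → ρ b = 1 → Commute a b)
    (hnc : ∀ z, ρ z ≠ 1 → ∃ b, ρ b = 1 ∧ ¬Commute ⁅b, z⁆ z) :
    IsWreathGrading φ.range fun g => (ρ (invFun φ g)).toAdd := by
  have hinv : ∀ a, invFun φ (φ a) = a := leftInverse_invFun hφ
  refine ⟨?_, ?_, ?_⟩
  · rintro _ ⟨a, rfl⟩ _ ⟨b, rfl⟩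
    simp only [← map_mul φ, hinv, map_mul ρ, toAdd_mul]
  · rintro _ ⟨a, rfl⟩ _ ⟨b, rfl⟩ ha hb
    simp only [hinv, toAdd_eq_zero] at ha hb
    exact (hcomm a b ha hb).map φ
  · rintro _ ⟨z, rfl⟩ hz
    simp only [hinv, ne_eq, toAdd_eq_zero] at hz
    obtain ⟨b, hb, hbz⟩ := hnc z hz
    refine ⟨φ b, ⟨b, rfl⟩, by simp [hinv, hb], fun h => hbz (hφ ?_)⟩
    simpa only [map_mul, map_commutatorElement] using h.eq

end

namespace wreathZ

variable {A : Type u} [CommGroup A]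

def base : ↥(finSuppSubgroup A) →* wreathZ A := SemidirectProduct.inl

def shift : Multiplicative ℤ →* wreathZ A := SemidirectProduct.inr

def degree : wreathZ A →* Multiplicative ℤ := SemidirectProduct.rightHom

def baseSingle (a : A) : ↥(finSuppSubgroup A) :=
  ⟨Pi.mulSingle 0 a, (Set.finite_singleton 0).subset Pi.mulSupport_mulSingle_subset⟩

@[simp]
theorem degree_base (n : ↥(finSuppSubgroup A)) : degree (base n) = 1 := rfl

@[simp]
theorem degree_shift (k : Multiplicative ℤ) : degree (shift k : wreathZ A) = k := rfl

theorem base_baseSingle_ne_one {a : A} (ha : a ≠ 1) : base (baseSingle a) ≠ 1 := by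
  intro h
  have := congrArg (fun f : ↥(finSuppSubgroup A) => (f : ℤ → A) 0)
    (SemidirectProduct.inl_injective (h.trans (map_one base).symm))
  exact ha (by simpa [baseSingle] using this)

theorem eq_base_mul_shift (w : wreathZ A) : w = base w.left * shift w.right :=
  SemidirectProduct.mk_eq_inl_mul_inr w.right w.left

theorem eq_base_of_degree_eq_one {a : wreathZ A} (ha : degree a = 1) : a = base a.left :=
  SemidirectProduct.ext rfl ha

theorem commute_of_degree_eq_one {a b : wreathZ A} (ha : degree a = 1)
    (hb : degree b = 1) : Commute a b := by
  rw [eq_base_of_degree_eq_one ha, eq_base_of_degree_eq_one hb]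
  exact (Commute.all _ _).map base

theorem shift_mul_base_mul_inv (k : Multiplicative ℤ) (n : ↥(finSuppSubgroup A)) :
    shift k * base n * (shift k)⁻¹ = base (shiftHom A k n) := by
  rw [← map_inv]
  exact (SemidirectProduct.inl_aut k n).symm

theorem conj_base (w : wreathZ A) (n : ↥(finSuppSubgroup A)) :
    w * base n * w⁻¹ = base (shiftHom A (degree w) n) := by
  calc w * base n * w⁻¹
      = base w.left * (shift w.right * base n * (shift w.right)⁻¹) * (base w.left)⁻¹ := by
        conv_lhs => rw [eq_base_mul_shift w]
        group
    _ = base (w.left * shiftHom A w.right n * w.left⁻¹) := by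
        rw [shift_mul_base_mul_inv, ← map_inv, ← map_mul, ← map_mul]
    _ = base (shiftHom A (degree w) n) := by rw [mul_inv_cancel_comm]; rfl

theorem not_commute_commutator {w : wreathZ A} (hw : degree w ≠ 1) {a : A} (ha : a ≠ 1) :
    ¬Commute ⁅base (baseSingle a), w⁆ w := by
  intro h
  have hc : ⁅base (baseSingle a), w⁆ =
      base (baseSingle a * (shiftHom A (degree w) (baseSingle a))⁻¹) := by
    rw [commutatorElement_def, map_mul, map_inv, ← conj_base]
    group
  rw [hc] at h
  have hconj := mul_inv_eq_of_eq_mul h.eq.symm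
  rw [conj_base] at hconj
  have h0 := congrArg (fun f : ↥(finSuppSubgroup A) => (f : ℤ → A) 0)
    (SemidirectProduct.inl_injective hconj)
  have hk : (degree w).toAdd ≠ 0 := hw
  have hk2 : -(degree w).toAdd - (degree w).toAdd ≠ 0 := by omega
  exact ha (by simpa [shiftHom, shiftBy, baseSingle, Pi.mulSingle_apply, hk, hk2] using h0.symm)

end wreathZ

/-- **For every nontrivial abelian group `A`, the wreath product `A ≀ ℤ` has no faithful
representation as a self-replicating bounded automata group.** -/
theorem wreath_no_faithful_selfReplicating_representation
    (A : Type u) [CommGroup A] [Nontrivial A] :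
    ¬ ∃ (X : Type u) (_ : Finite X) (_ : Nontrivial X)
        (φ : wreathZ A →* Equiv.Perm (List X)),
        Function.Injective φ ∧ SelfReplicating φ.range ∧
        BoundedAutomataGroup φ.range := by
  rintro ⟨X, _, _, φ, hφ, hSR, hG, -, -, hbdd⟩
  obtain ⟨a, ha⟩ := exists_ne (1 : A)
  have hτ := isWreathGrading_range hφ wreathZ.degree
    (fun _ _ => wreathZ.commute_of_degree_eq_one)
    fun z hz => ⟨_, wreathZ.degree_base _, wreathZ.not_commute_commutator hz ha⟩
  have hinv : ∀ w, invFun φ (φ w) = w := leftInverse_invFun hφ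
  set t : wreathZ A := wreathZ.shift (Multiplicative.ofAdd 1)
  obtain ⟨htb, htfs⟩ := hbdd _ ⟨t, rfl⟩
  have hb := hτ.eq_one_of_grading_eq_zero hG hSR ⟨t, rfl⟩ (by simp [hinv, t]) htb htfs
    ⟨wreathZ.base (wreathZ.baseSingle a), rfl⟩ (by simp [hinv])
  exact wreathZ.base_baseSingle_ne_one ha (hφ (hb.trans (map_one φ).symm))
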